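/- arXiv:2312.10614 — 6 statements merged into one kernel-verified Lean document; each statement's English description precedes it below -/
import Mathlib

section
/- For Re(u) > 1 and Re(v) > 1, the double sum over pairs (q,r) with q = r of b(q) b̄(r) q^{-u} r^{-v}, where b(m) = Σ_{k ≤ M, k | m} a(k), equals ζ(u+v) · Σ_{k ≤ M} Σ_{l ≤ M} a(k) conj(a(l)) / [k,l]^{u+v}, where [k,l] denotes the least common multiple of k and l. -/
open Complex Finset

/-! Expanding `|b n|²` gives `∑ k, ∑ l, a k * conj (a l) * [lcm k l ∣ n]`, and summing `n ^ (-s)`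
over the multiples `n` of `d` gives `d ^ (-s) * ζ s`. -/

lemma hasSum_natCast_cpow_neg {s : ℂ} (hs : 1 < s.re) :
    HasSum (fun n : ℕ => (n : ℂ) ^ (-s)) (riemannZeta s) := by
  rw [zeta_eq_tsum_one_div_nat_cpow hs]
  convert (summable_one_div_nat_cpow.mpr hs).hasSum using 2 with n
  rw [cpow_neg, one_div]

lemma hasSum_ite_dvd_natCast_cpow_neg {d : ℕ} (hd : d ≠ 0) {s : ℂ} (hs : 1 < s.re) :
    HasSum (fun n : ℕ => if d ∣ n then (n : ℂ) ^ (-s) else 0)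
      ((d : ℂ) ^ (-s) * riemannZeta s) := by
  refine ((mul_right_injective₀ hd).hasSum_iff fun n hn => if_neg ?_).mp
    (((hasSum_natCast_cpow_neg hs).mul_left ((d : ℂ) ^ (-s))).congr_fun fun m => ?_)
  · rintro ⟨m, rfl⟩
    exact hn ⟨m, rfl⟩
  · rw [Function.comp_apply, if_pos (dvd_mul_right d m), Nat.cast_mul, natCast_mul_natCast_cpow]

lemma hasSum_ite_dvd_succ_cpow_neg {d : ℕ} (hd : d ≠ 0) {s : ℂ} (hs : 1 < s.re) :
    HasSum (fun n : ℕ => if d ∣ n + 1 then ((n + 1 : ℕ) : ℂ) ^ (-s) else 0)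
      ((d : ℂ) ^ (-s) * riemannZeta s) := by
  have hs₀ : -s ≠ 0 := by
    rintro h
    norm_num [neg_eq_zero.mp h] at hs
  simpa [zero_cpow hs₀] using
    (hasSum_nat_add_iff' 1).mpr (hasSum_ite_dvd_natCast_cpow_neg hd hs)

lemma sum_filter_dvd_mul_sum_filter_dvd {R : Type*} [CommSemiring R] (S T : Finset ℕ)
    (f g : ℕ → R) (n : ℕ) :
    (∑ k ∈ S.filter (· ∣ n), f k) * (∑ l ∈ T.filter (· ∣ n), g l)
      = ∑ k ∈ S, ∑ l ∈ T, if Nat.lcm k l ∣ n then f k * g l else 0 := by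
  simp only [sum_filter, sum_mul_sum, Nat.lcm_dvd_iff, ite_zero_mul_ite_zero]

theorem stmt0_general (M : ℕ) (a : ℕ → ℂ) (u v : ℂ) (hu : 1 < u.re) (hv : 1 < v.re)
    (b : ℕ → ℂ) (hb : ∀ m, b m = ∑ k ∈ (Icc 1 M).filter (· ∣ m), a k) :
    ∑' q : ℕ, b (q + 1) * (starRingEnd ℂ) (b (q + 1)) *
        ((q + 1 : ℕ) : ℂ) ^ (-u) * ((q + 1 : ℕ) : ℂ) ^ (-v)
      = riemannZeta (u + v) *
        ∑ k ∈ Icc 1 M, ∑ l ∈ Icc 1 M,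
          a k * (starRingEnd ℂ) (a l) / ((Nat.lcm k l : ℂ) ^ (u + v)) := by
  have hs : 1 < (u + v).re := by
    rw [add_re]
    linarith
  have hterm (q : ℕ) : b (q + 1) * (starRingEnd ℂ) (b (q + 1)) *
      ((q + 1 : ℕ) : ℂ) ^ (-u) * ((q + 1 : ℕ) : ℂ) ^ (-v)
      = ∑ k ∈ Icc 1 M, ∑ l ∈ Icc 1 M, a k * (starRingEnd ℂ) (a l) *
          if Nat.lcm k l ∣ q + 1 then ((q + 1 : ℕ) : ℂ) ^ (-(u + v)) else 0 := by
    rw [mul_assoc, ← cpow_add _ _ (Nat.cast_ne_zero.mpr q.succ_ne_zero), ← neg_add, hb,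
      map_sum, sum_filter_dvd_mul_sum_filter_dvd, sum_mul]
    simp only [sum_mul, ite_mul, zero_mul, mul_ite, mul_zero]
  refine HasSum.tsum_eq ?_
  simp only [hterm, mul_sum]
  refine hasSum_sum fun k hk => hasSum_sum fun l hl => ?_
  have hlcm : Nat.lcm k l ≠ 0 := (Nat.lcm_pos (mem_Icc.mp hk).1 (mem_Icc.mp hl).1).ne'
  rw [show riemannZeta (u + v) * (a k * (starRingEnd ℂ) (a l) / (Nat.lcm k l : ℂ) ^ (u + v))
      = a k * (starRingEnd ℂ) (a l) * ((Nat.lcm k l : ℂ) ^ (-(u + v)) * riemannZeta (u + v)) by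
    rw [cpow_neg]
    ring]
  exact (hasSum_ite_dvd_succ_cpow_neg hlcm hs).mul_left (a k * (starRingEnd ℂ) (a l))

theorem stmt0 (M : ℕ) (hM : 1 ≤ M) (a : ℕ → ℂ) (u v : ℂ) (hu : 1 < u.re) (hv : 1 < v.re)
    (b : ℕ → ℂ) (hb : ∀ m, b m = ∑ k ∈ (Icc 1 M).filter (· ∣ m), a k) :
    ∑' q : ℕ, b (q + 1) * (starRingEnd ℂ) (b (q + 1)) *
        ((q + 1 : ℕ) : ℂ) ^ (-u) * ((q + 1 : ℕ) : ℂ) ^ (-v)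
      = riemannZeta (u + v) *
        ∑ k ∈ Icc 1 M, ∑ l ∈ Icc 1 M,
          a k * (starRingEnd ℂ) (a l) / ((Nat.lcm k l : ℂ) ^ (u + v)) :=
  stmt0_general M a u v hu hv b hb
end

section
/- For complex v with Re(v) > 1, real y > 0 implicit, positive integers h, k, l, f, and with absolute convergence: Γ(v) · Σ_{n=1}^∞ e^{2πi f n / l} (hk + n)^{-v} = ∫_0^∞ y^{v-1} e^{-hky} / (e^{y - 2πi f/l} - 1) dy. -/
open Complex Real

/-!
Expanding the kernel as a geometric series,
`e^{-hk y} / (e^{y - c} - 1) = ∑_{n ≥ 0} e^{(n+1) c} e^{-(hk + n + 1) y}` with `c = 2πi f/l`,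
and integrating term by term against `y^{v-1}` turns each term into `Γ(v) e^{(n+1)c} (hk+n+1)^{-v}`.
Termwise integration is justified by absolute convergence, since `|e^{(n+1)c}| = 1` and
`∑ (hk+n+1)^{-Re v}` converges for `Re v > 1`.
-/

lemma add_natCast_add_one_pos {q : ℝ} (hq : -1 < q) (n : ℕ) : 0 < q + (n + 1) := by
  have : (0 : ℝ) ≤ n := n.cast_nonneg
  linarith

lemma hasSum_exp_neg_nat_succ_mul {z : ℂ} (hz : 0 < z.re) :
    HasSum (fun n : ℕ => cexp (-((n + 1) * z))) (cexp z - 1)⁻¹ := by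
  set w := cexp (-z) with hw_def
  have hw : ‖w‖ < 1 := by
    rw [norm_exp, neg_re, Real.exp_lt_one_iff]
    linarith
  have hterm (n : ℕ) : cexp (-((n + 1) * z)) = w * w ^ n := by
    rw [← pow_succ', ← Complex.exp_nat_mul]
    push_cast
    ring_nf
  have hsum : (cexp z - 1)⁻¹ = w * (1 - w)⁻¹ := by
    rw [hw_def, Complex.exp_neg, ← mul_inv, mul_sub, mul_one,
      mul_inv_cancel₀ (Complex.exp_ne_zero z)]
  simp only [hterm, hsum]
  exact (hasSum_geometric_of_norm_lt_one hw).mul_left w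

lemma hasSum_exp_mul_exp_neg_mul {c : ℂ} (hc : c.re ≤ 0) (q : ℝ) {t : ℝ} (ht : 0 < t) :
    HasSum (fun n : ℕ => cexp ((n + 1) * c) * (rexp (-(q + (n + 1)) * t) : ℂ))
      (cexp (-q * t) / (cexp (t - c) - 1)) := by
  have hz : 0 < ((t : ℂ) - c).re := by
    rw [sub_re, ofReal_re]
    linarith
  have hterm (n : ℕ) : cexp ((n + 1) * c) * (rexp (-(q + (n + 1)) * t) : ℂ) =
      cexp (-q * t) * cexp (-((n + 1) * (t - c))) := by
    rw [ofReal_exp, ← Complex.exp_add, ← Complex.exp_add]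
    push_cast
    ring_nf
  simp only [hterm, div_eq_mul_inv]
  exact (hasSum_exp_neg_nat_succ_mul hz).mul_left _

lemma summable_norm_exp_mul_div_rpow {c : ℂ} (hc : c.re ≤ 0) {q : ℝ} (hq : -1 < q) {s : ℝ}
    (hs : 1 < s) :
    Summable fun n : ℕ => ‖cexp ((n + 1) * c)‖ / (q + (n + 1)) ^ s := by
  have hpos := add_natCast_add_one_pos hq
  refine ((Real.summable_one_div_nat_add_rpow (q + 1) s).mpr hs).of_nonneg_of_le
    (fun n => div_nonneg (norm_nonneg _) (rpow_nonneg (hpos n).le _)) fun n => ?_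
  have hnorm : ‖cexp ((n + 1) * c)‖ ≤ 1 := by
    rw [norm_exp, Real.exp_le_one_iff, show ((n : ℂ) + 1) = ((n + 1 : ℝ) : ℂ) by push_cast; rfl,
      re_ofReal_mul]
    exact mul_nonpos_of_nonneg_of_nonpos (by positivity) hc
  rw [show (n : ℝ) + (q + 1) = q + (n + 1) by ring, abs_of_pos (hpos n)]
  exact div_le_div_of_nonneg_right hnorm (rpow_nonneg (hpos n).le _)

theorem Gamma_mul_tsum_exp_mul_cpow_neg {c : ℂ} (hc : c.re ≤ 0) {q : ℝ} (hq : -1 < q) {v : ℂ}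
    (hv : 1 < v.re) :
    Gamma v * ∑' n : ℕ, cexp ((n + 1) * c) * ((q + (n + 1) : ℝ) : ℂ) ^ (-v) =
      ∫ y : ℝ in Set.Ioi 0, (y : ℂ) ^ (v - 1) * cexp (-q * y) / (cexp (y - c) - 1) := by
  have hpos := add_natCast_add_one_pos hq
  have hmellin := hasSum_mellin (fun n => Or.inr (hpos n)) (by linarith)
    (fun t ht => hasSum_exp_mul_exp_neg_mul hc q ht) (summable_norm_exp_mul_div_rpow hc hq hv)
  simp only [mellin, smul_eq_mul, ← mul_div_assoc] at hmellin
  rw [← hmellin.tsum_eq, ← tsum_mul_left]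
  simp only [cpow_neg, div_eq_mul_inv, mul_assoc]

theorem stmt7_general (v : ℂ) (hv : 1 < v.re) (h k l f : ℕ) :
    Complex.Gamma v *
        ∑' n : ℕ, Complex.exp (2 * (π : ℂ) * I * ((n : ℂ) + 1) * (f : ℂ) / (l : ℂ)) *
          ((h * k + (n + 1) : ℕ) : ℂ) ^ (-v)
      = ∫ y : ℝ in Set.Ioi 0,
          (y : ℂ) ^ (v - 1) * Complex.exp (-((h * k : ℕ) : ℂ) * (y : ℂ)) /
            (Complex.exp ((y : ℂ) - 2 * (π : ℂ) * I * (f : ℂ) / (l : ℂ)) - 1) := by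
  have hc : (2 * (π : ℂ) * I * (f : ℂ) / (l : ℂ)).re ≤ 0 := by simp
  have hq : (-1 : ℝ) < ((h * k : ℕ) : ℝ) := neg_one_lt_zero.trans_le (Nat.cast_nonneg _)
  convert Gamma_mul_tsum_exp_mul_cpow_neg hc hq hv using 6 with n <;> push_cast <;> ring_nf

theorem stmt7 (v : ℂ) (hv : 1 < v.re) (h k l f : ℕ)
    (hh : 0 < h) (hk : 0 < k) (hl : 0 < l) (hf1 : 1 ≤ f) (hfl : f ≤ l) :
    Complex.Gamma v *
        ∑' n : ℕ, Complex.exp (2 * (π : ℂ) * I * ((n : ℂ) + 1) * (f : ℂ) / (l : ℂ)) *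
          ((h * k + (n + 1) : ℕ) : ℂ) ^ (-v)
      = ∫ y : ℝ in Set.Ioi 0,
          (y : ℂ) ^ (v - 1) * Complex.exp (-((h * k : ℕ) : ℂ) * (y : ℂ)) /
            (Complex.exp ((y : ℂ) - 2 * (π : ℂ) * I * (f : ℂ) / (l : ℂ)) - 1) :=
  stmt7_general v hv h k l f
end

section
/- For Re(u) > 0, y > 0, and positive integers k, l, f: k^{-u} Γ(u) Σ_{h=1}^∞ e^{-hky + 2πi f h k / l} h^{-u} = ∫_0^∞ x^{u-1} / (e^{k(x+y) - 2πi f k / l} - 1) dx. -/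
open Complex Real

/-!
Expanding `(exp z - 1)⁻¹ = ∑_{n ≥ 1} exp (-n z)` for `0 < re z` and integrating term by term
(`hasSum_mellin`), the Mellin transform of `t ↦ (exp (a t + w) - 1)⁻¹` becomes the Dirichlet series
`a ^ (-s) Γ(s) ∑_{n ≥ 1} exp (-n w) n ^ (-s)`. With `a = k` and `w = k y - 2πifk/l`, the root of
unity has modulus one, so `re w = k y > 0` gives the needed geometric decay.
-/

theorem hasSum_exp_neg_succ_mul {z : ℂ} (hz : 0 < z.re) :
    HasSum (fun n : ℕ => exp (-((n + 1) * z))) (exp z - 1)⁻¹ := by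
  have hlt : ‖exp (-z)‖ < 1 := by simpa [norm_exp] using hz
  have hterm (n : ℕ) : exp (-((n + 1) * z)) = exp (-z) * exp (-z) ^ n := by
    rw [← pow_succ', ← Complex.exp_nat_mul]; push_cast; ring_nf
  have hsum : (exp z - 1)⁻¹ = exp (-z) * (1 - exp (-z))⁻¹ := by
    rw [Complex.exp_neg, ← mul_inv, mul_sub, mul_one, mul_inv_cancel₀ (exp_ne_zero z)]
  simpa only [hterm, hsum] using (hasSum_geometric_of_norm_lt_one hlt).mul_left (exp (-z))

theorem summable_norm_exp_neg_succ_mul_div_rpow {w : ℂ} (hw : 0 < w.re) {a : ℝ} (ha : 0 < a)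
    {σ : ℝ} (hσ : 0 ≤ σ) :
    Summable fun n : ℕ => ‖exp (-((n + 1) * w))‖ / (((n : ℝ) + 1) * a) ^ σ := by
  have hgeo : Summable fun n : ℕ => rexp (-w.re) ^ (n + 1) :=
    (summable_nat_add_iff 1).mpr <|
      summable_geometric_of_lt_one (Real.exp_nonneg _) (by simpa using hw)
  refine (hgeo.div_const (a ^ σ)).of_nonneg_of_le (fun n => by positivity) fun n => ?_
  have hnorm : ‖exp (-((n + 1) * w))‖ = rexp (-w.re) ^ (n + 1) := by
    rw [norm_exp, ← Real.exp_nat_mul]; push_cast; simp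
  rw [hnorm, Real.mul_rpow (by positivity) ha.le]
  gcongr
  exact le_mul_of_one_le_left (by positivity)
    (Real.one_le_rpow (by linarith [n.cast_nonneg (α := ℝ)]) hσ)

theorem hasSum_mellin_inv_exp_mul_add_sub_one {a : ℝ} (ha : 0 < a) {w : ℂ} (hw : 0 < w.re)
    {s : ℂ} (hs : 0 < s.re) :
    HasSum (fun n : ℕ =>
        (a : ℂ) ^ (-s) * Gamma s * (exp (-((n + 1) * w)) * ((n + 1 : ℕ) : ℂ) ^ (-s)))
      (mellin (fun t : ℝ => (exp (a * t + w) - 1)⁻¹) s) := by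
  have hF : ∀ t ∈ Set.Ioi (0 : ℝ), HasSum (fun n : ℕ => exp (-((n + 1) * w)) *
      rexp (-(((n : ℝ) + 1) * a) * t)) (exp (a * t + w) - 1)⁻¹ := by
    intro t ht
    have hre : 0 < ((a : ℂ) * t + w).re := by
      simpa using add_pos (mul_pos ha ht) hw
    convert hasSum_exp_neg_succ_mul hre using 2 with n
    push_cast
    rw [← Complex.exp_add]
    ring_nf
  convert hasSum_mellin (fun n => Or.inr (by positivity)) hs hF
    (summable_norm_exp_neg_succ_mul_div_rpow hw ha hs.le) using 2 with n
  have hcast : ((n + 1 : ℕ) : ℂ) = (((n : ℝ) + 1 : ℝ) : ℂ) := by push_cast; rfl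
  rw [ofReal_mul, mul_cpow_ofReal_nonneg (by positivity) ha.le, hcast, cpow_neg, cpow_neg,
    div_eq_mul_inv, mul_inv]
  ring

theorem stmt8_general (u : ℂ) (hu : 0 < u.re) (y : ℝ) (hy : 0 < y) (k l f : ℕ)
    (hk : 0 < k) :
    (k : ℂ) ^ (-u) * Complex.Gamma u *
        ∑' h : ℕ, Complex.exp (-(((h : ℂ) + 1) * (k : ℂ) * (y : ℂ))
            + 2 * (π : ℂ) * I * (f : ℂ) * ((h : ℂ) + 1) * (k : ℂ) / (l : ℂ)) *
          ((h + 1 : ℕ) : ℂ) ^ (-u)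
      = ∫ x : ℝ in Set.Ioi 0,
          (x : ℂ) ^ (u - 1) /
            (Complex.exp ((k : ℂ) * ((x : ℂ) + (y : ℂ)) - 2 * (π : ℂ) * I * (f : ℂ) * (k : ℂ) / (l : ℂ)) - 1) := by
  set c : ℂ := 2 * (π : ℂ) * I * (f : ℂ) * (k : ℂ) / (l : ℂ)
  have hw : 0 < ((k : ℂ) * y - c).re := by simpa [c] using mul_pos (Nat.cast_pos.mpr hk) hy
  have key := hasSum_mellin_inv_exp_mul_add_sub_one (a := k) (Nat.cast_pos.mpr hk) hw hu
  simp only [ofReal_natCast] at key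
  calc _ = ∑' n : ℕ, (k : ℂ) ^ (-u) * Gamma u *
        (exp (-((n + 1) * ((k : ℂ) * y - c))) * ((n + 1 : ℕ) : ℂ) ^ (-u)) := by
        rw [tsum_mul_left]
        congr 3 with n
        simp only [c]
        ring_nf
    _ = mellin (fun t : ℝ => (exp (k * t + ((k : ℂ) * y - c)) - 1)⁻¹) u := key.tsum_eq
    _ = _ := by
        rw [mellin]
        congr 1 with x
        rw [smul_eq_mul, div_eq_mul_inv]
        ring_nf

theorem stmt8 (u : ℂ) (hu : 0 < u.re) (y : ℝ) (hy : 0 < y) (k l f : ℕ)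
    (hk : 0 < k) (hl : 0 < l) (hf1 : 1 ≤ f) (hfl : f ≤ l) :
    (k : ℂ) ^ (-u) * Complex.Gamma u *
        ∑' h : ℕ, Complex.exp (-(((h : ℂ) + 1) * (k : ℂ) * (y : ℂ))
            + 2 * (π : ℂ) * I * (f : ℂ) * ((h : ℂ) + 1) * (k : ℂ) / (l : ℂ)) *
          ((h + 1 : ℕ) : ℂ) ^ (-u)
      = ∫ x : ℝ in Set.Ioi 0,
          (x : ℂ) ^ (u - 1) /
            (Complex.exp ((k : ℂ) * ((x : ℂ) + (y : ℂ)) - 2 * (π : ℂ) * I * (f : ℂ) * (k : ℂ) / (l : ℂ)) - 1) :=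
  stmt8_general u hu y hy k l f hk
end

section
/- Define h(u, x) = ∫_0^∞ y^{2σ-1-u}(1+y)^{u-1} e^{2πi x y} dy for fixed σ ∈ (1/4, 1/2), Re(u) < 2σ and x > 0. Then h(u, x) = O(x^{Re(u) - 2σ}) as x → ∞, uniformly for u in a fixed compact set with Re(u) < 0. -/
/-!
Rotate the contour from the positive real axis to the positive imaginary axis. On the closed
right half-plane `‖z ^ w‖ ≤ ‖z‖ ^ w.re * exp (π / 2 * |w.im|)` and `‖1 + z‖ ≥ 1`, so, as
`Re u ≤ 1`, the integrand is at most `exp (π |Im u|) ‖z‖ ^ (2σ - 1 - Re u) exp (-2πx Im z)`.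
On the imaginary axis this gives
`‖h u x‖ ≤ exp (π |Im u|) ∫₀^∞ s ^ (2σ - 1 - Re u) exp (-2πxs) ds
  = exp (π |Im u|) Γ(2σ - Re u) (2πx) ^ (Re u - 2σ)`,
whose coefficient of `x ^ (Re u - 2σ)` is continuous in `u`, hence bounded on `K`.
The rotation goes through rectangles `[ε, R] × [0, T]`, which avoid the branch point `0`: the same
bound kills the top side and gives the limit `ε → 0` by dominated convergence (`2σ - Re u > 0`),
and on `Re z = R` the integrand is `O(R ^ (2σ - 2) exp (-2πx Im z))`.
-/

open Complex Real

open MeasureTheory Set Filter Topology Interval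

theorem Real.rpow_le_rpow_add_rpow {p q r : ℝ} (a : ℝ) (hp : 0 < p) (hpq : p ≤ q)
    (hqr : q ≤ r) : q ^ a ≤ p ^ a + r ^ a := by
  rcases le_total 0 a with ha | ha
  · exact (rpow_le_rpow (hp.le.trans hpq) hqr ha).trans
      (le_add_of_nonneg_left (rpow_nonneg hp.le a))
  · exact (rpow_le_rpow_of_nonpos hp hpq ha).trans
      (le_add_of_nonneg_right (rpow_nonneg (hp.le.trans (hpq.trans hqr)) a))

theorem Real.rpow_mul_rpow_le_rpow_add {a b p q r : ℝ} (hr : 0 < r) (hrp : r ≤ p)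
    (hpq : p ≤ q) (hb : b ≤ 0) (hab : a + b ≤ 0) : p ^ a * q ^ b ≤ r ^ (a + b) := by
  have hp : 0 < p := hr.trans_le hrp
  have hq : 0 < q := hp.trans_le hpq
  rcases le_total 0 a with ha | ha
  · calc p ^ a * q ^ b ≤ q ^ a * q ^ b := by gcongr
      _ = q ^ (a + b) := (rpow_add hq a b).symm
      _ ≤ r ^ (a + b) := rpow_le_rpow_of_nonpos hr (hrp.trans hpq) hab
  · calc p ^ a * q ^ b ≤ r ^ a * r ^ b :=
          mul_le_mul (rpow_le_rpow_of_nonpos hr hrp ha)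
            (rpow_le_rpow_of_nonpos hr (hrp.trans hpq) hb) (by positivity) (by positivity)
      _ = r ^ (a + b) := (rpow_add hr a b).symm

theorem integrableOn_rpow_mul_exp_neg_mul {a c : ℝ} (ha : -1 < a) (hc : 0 < c) :
    IntegrableOn (fun s : ℝ => s ^ a * Real.exp (-(c * s))) (Ioi 0) := by
  simpa using integrableOn_rpow_mul_exp_neg_mul_rpow ha one_pos hc

theorem integrableOn_add_rpow_mul_exp_neg_mul {V a c : ℝ} (hV : 0 ≤ V) (ha : -1 < a)
    (hc : 0 < c) : IntegrableOn (fun s : ℝ => (V + s) ^ a * Real.exp (-(c * s))) (Ioi 0) := by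
  have hshift : IntegrableOn (fun s : ℝ => (s + V) ^ a * Real.exp (-(c * (s + V)))) (Ioi 0) := by
    have := (integrableOn_rpow_mul_exp_neg_mul ha hc).mono_set (Ioi_subset_Ioi hV)
    rw [← (measurePreserving_add_right volume V).integrableOn_comp_preimage
      (measurableEmbedding_addRight V), preimage_add_const_Ioi, sub_self] at this
    exact this
  refine IntegrableOn.congr_fun (hshift.const_mul (Real.exp (c * V))) (fun s _ => ?_)
    measurableSet_Ioi
  rw [add_comm s V, mul_left_comm, ← Real.exp_add]
  ring_nf

theorem integrableOn_rpow_add_add_rpow_mul_exp_neg_mul {V a c : ℝ} (hV : 0 ≤ V) (ha : -1 < a)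
    (hc : 0 < c) :
    IntegrableOn (fun s : ℝ => (s ^ a + (V + s) ^ a) * Real.exp (-(c * s))) (Ioi 0) := by
  simp_rw [add_mul]
  exact Integrable.add (integrableOn_rpow_mul_exp_neg_mul ha hc)
    (integrableOn_add_rpow_mul_exp_neg_mul hV ha hc)

theorem tendsto_rpow_add_rpow_mul_exp_neg_mul_atTop (a R : ℝ) {c : ℝ} (hc : 0 < c) :
    Tendsto (fun T : ℝ => (T ^ a + (R + T) ^ a) * Real.exp (-(c * T))) atTop (𝓝 0) := by
  have h₁ : Tendsto (fun T : ℝ => T ^ a * Real.exp (-(c * T))) atTop (𝓝 0) := by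
    simpa only [neg_mul] using tendsto_rpow_mul_exp_neg_mul_atTop_nhds_zero a c hc
  have h₂ : Tendsto (fun T : ℝ => (R + T) ^ a * Real.exp (-(c * T))) atTop (𝓝 0) := by
    have := ((h₁.comp (tendsto_atTop_add_const_left atTop R tendsto_id)).const_mul
      (Real.exp (c * R)))
    rw [mul_zero] at this
    refine this.congr fun T => ?_
    simp only [Function.comp, id]
    rw [mul_left_comm, ← Real.exp_add]
    ring_nf
  simpa only [add_mul, add_zero] using h₁.add h₂

section ContourRotation

variable {E : Type*} [NormedAddCommGroup E] [NormedSpace ℂ E] {f : ℂ → E}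

theorem intervalIntegral_eq_sub_integral_vertical {ε R : ℝ} (hε : 0 < ε) (hεR : ε ≤ R)
    (hf : DifferentiableOn ℂ f {z | 0 < z.re})
    (hε_int : IntegrableOn (fun s : ℝ => f (ε + s * I)) (Ioi 0))
    (hR_int : IntegrableOn (fun s : ℝ => f (R + s * I)) (Ioi 0))
    (htop : Tendsto (fun T : ℝ => ∫ t in ε..R, f (t + T * I)) atTop (𝓝 0)) :
    ∫ t in ε..R, f t =
      I • (∫ s : ℝ in Ioi 0, f (ε + s * I)) - I • ∫ s : ℝ in Ioi 0, f (R + s * I) := by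
  have hrect : ∀ T : ℝ, ∫ t in ε..R, f t = (∫ t in ε..R, f (t + T * I)) +
      (I • (∫ s in 0..T, f (ε + s * I)) - I • ∫ s in 0..T, f (R + s * I)) := by
    intro T
    have hsub : [[(ε : ℂ).re, (R + T * I : ℂ).re]] ×ℂ
        [[(ε : ℂ).im, (R + T * I : ℂ).im]] ⊆ {z | 0 < z.re} := fun z hz => by
      have : z.re ∈ Icc ε R := by simpa [uIcc_of_le hεR] using hz.1
      exact hε.trans_le this.1
    have := integral_boundary_rect_eq_zero_of_differentiableOn f ε (R + T * I) (hf.mono hsub)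
    simp only [ofReal_re, ofReal_im, add_re, add_im, mul_re, mul_im, I_re, I_im, ofReal_zero,
      zero_mul, add_zero, mul_zero, mul_one, sub_zero, zero_add] at this
    rw [← sub_eq_zero, ← this]
    abel
  have hlim := htop.add
    (((intervalIntegral_tendsto_integral_Ioi 0 hε_int tendsto_id).const_smul I).sub
      ((intervalIntegral_tendsto_integral_Ioi 0 hR_int tendsto_id).const_smul I))
  rw [zero_add] at hlim
  exact tendsto_nhds_unique (tendsto_const_nhds.congr hrect) hlim

theorem integral_Ioi_eq_I_smul_integral_vertical {ε : ℝ} (hε : 0 < ε)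
    (hf : DifferentiableOn ℂ f {z | 0 < z.re})
    (hvert : ∀ v : ℝ, 0 < v → IntegrableOn (fun s : ℝ => f (v + s * I)) (Ioi 0))
    (htop : ∀ R, ε ≤ R →
      Tendsto (fun T : ℝ => ∫ t in ε..R, f (t + T * I)) atTop (𝓝 0))
    (hright : Tendsto (fun R : ℝ => ∫ s : ℝ in Ioi 0, f (R + s * I)) atTop (𝓝 0))
    (hreal : IntegrableOn (fun t : ℝ => f t) (Ioi ε)) :
    ∫ t : ℝ in Ioi ε, f t = I • ∫ s : ℝ in Ioi 0, f (ε + s * I) := by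
  have hlim := tendsto_const_nhds (x := I • ∫ s : ℝ in Ioi 0, f (ε + s * I)) |>.sub
    (hright.const_smul I)
  rw [smul_zero, sub_zero] at hlim
  refine tendsto_nhds_unique
    ((intervalIntegral_tendsto_integral_Ioi ε hreal tendsto_id).congr' ?_) hlim
  filter_upwards [eventually_ge_atTop ε] with R hR
  exact intervalIntegral_eq_sub_integral_vertical hε hR hf (hvert ε hε)
    (hvert R (hε.trans_le hR)) (htop R hR)

theorem integral_Ioi_eq_I_smul_integral_imaginary (hf : DifferentiableOn ℂ f {z | 0 < z.re})
    (hvert : ∀ v : ℝ, 0 < v → IntegrableOn (fun s : ℝ => f (v + s * I)) (Ioi 0))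
    (htop : ∀ ε R, 0 < ε → ε ≤ R →
      Tendsto (fun T : ℝ => ∫ t in ε..R, f (t + T * I)) atTop (𝓝 0))
    (hright : Tendsto (fun R : ℝ => ∫ s : ℝ in Ioi 0, f (R + s * I)) atTop (𝓝 0))
    (hreal : IntegrableOn (fun t : ℝ => f t) (Ioi 0))
    (hleft : Tendsto (fun ε : ℝ => ∫ s : ℝ in Ioi 0, f (ε + s * I)) (𝓝[>] 0)
      (𝓝 (∫ s : ℝ in Ioi 0, f (s * I)))) :
    ∫ t : ℝ in Ioi 0, f t = I • ∫ s : ℝ in Ioi 0, f (s * I) := by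
  have hcover := (aecover_Ioi_of_Ioi (μ := volume) (l := 𝓝[>] (0 : ℝ)) (a := id)
    nhdsWithin_le_nhds).integral_tendsto_of_countably_generated hreal
  refine tendsto_nhds_unique (hcover.congr' ?_) (hleft.const_smul I)
  filter_upwards [self_mem_nhdsWithin] with ε (hε : 0 < ε)
  rw [Measure.restrict_restrict measurableSet_Ioi, Ioi_inter_Ioi, id, max_eq_left hε.le]
  exact integral_Ioi_eq_I_smul_integral_vertical hε hf hvert (htop ε · hε) hright
    (hreal.mono_set (Ioi_subset_Ioi hε.le))

end ContourRotation

theorem Complex.norm_cpow_le_of_re_nonneg {z : ℂ} (hz : 0 ≤ z.re) (w : ℂ) :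
    ‖z ^ w‖ ≤ ‖z‖ ^ w.re * Real.exp (π / 2 * |w.im|) := by
  have harg : |arg z| ≤ π / 2 := abs_arg_le_pi_div_two_iff.2 hz
  refine (norm_cpow_le z w).trans ?_
  rw [div_eq_mul_inv, ← Real.exp_neg]
  gcongr
  calc -(arg z * w.im) ≤ |arg z| * |w.im| := by rw [← abs_mul]; exact neg_le_abs _
    _ ≤ π / 2 * |w.im| := by gcongr

theorem Complex.norm_exp_ofReal_mul_I_mul (c : ℝ) (z : ℂ) :
    ‖exp (c * I * z)‖ = Real.exp (-(c * z.im)) := by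
  simp [norm_exp]

noncomputable def oscKernel (α β : ℂ) (c : ℝ) (z : ℂ) : ℂ :=
  z ^ α * (1 + z) ^ β * exp (c * I * z)

namespace oscKernel

variable {α β : ℂ} {c : ℝ}

theorem norm_ofReal {t : ℝ} (ht : 0 < t) :
    ‖oscKernel α β c t‖ = t ^ α.re * (1 + t) ^ β.re := by
  rw [oscKernel, norm_mul, norm_mul, norm_exp_ofReal_mul_I_mul, ← ofReal_one, ← ofReal_add,
    norm_cpow_eq_rpow_re_of_pos ht, norm_cpow_eq_rpow_re_of_pos (by positivity)]
  simp

theorem norm_le {z : ℂ} (hz : 0 ≤ z.re) :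
    ‖oscKernel α β c z‖ ≤ Real.exp (π / 2 * (|α.im| + |β.im|)) *
      (‖z‖ ^ α.re * ‖1 + z‖ ^ β.re) * Real.exp (-(c * z.im)) := by
  have h1z : 0 ≤ (1 + z).re := by simp only [add_re, one_re]; linarith
  rw [oscKernel, norm_mul, norm_mul, norm_exp_ofReal_mul_I_mul, mul_add, Real.exp_add]
  refine mul_le_mul_of_nonneg_right ?_ (Real.exp_pos _).le
  calc ‖z ^ α‖ * ‖(1 + z) ^ β‖
      ≤ (‖z‖ ^ α.re * Real.exp (π / 2 * |α.im|)) *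
          (‖1 + z‖ ^ β.re * Real.exp (π / 2 * |β.im|)) :=
        mul_le_mul (norm_cpow_le_of_re_nonneg hz α) (norm_cpow_le_of_re_nonneg h1z β)
          (norm_nonneg _) (by positivity)
    _ = _ := by ring

theorem norm_le_of_re_nonpos (hβ : β.re ≤ 0) {z : ℂ} (hz : 0 ≤ z.re) :
    ‖oscKernel α β c z‖ ≤ Real.exp (π / 2 * (|α.im| + |β.im|)) * ‖z‖ ^ α.re *
      Real.exp (-(c * z.im)) := by
  have h1z : 1 ≤ ‖1 + z‖ := by
    calc (1 : ℝ) ≤ (1 + z).re := by simp only [add_re, one_re]; linarith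
      _ ≤ ‖1 + z‖ := re_le_norm _
  refine (norm_le hz).trans ?_
  gcongr
  exact mul_le_of_le_one_right (by positivity) (rpow_le_one_of_one_le_of_nonpos h1z hβ)

theorem norm_le_re_rpow (hβ : β.re ≤ 0) (hαβ : α.re + β.re ≤ 0) {z : ℂ}
    (hz : 0 < z.re) :
    ‖oscKernel α β c z‖ ≤ Real.exp (π / 2 * (|α.im| + |β.im|)) * z.re ^ (α.re + β.re) *
      Real.exp (-(c * z.im)) := by
  have hz1z : ‖z‖ ≤ ‖1 + z‖ := by
    rw [← sq_le_sq₀ (norm_nonneg _) (norm_nonneg _), Complex.sq_norm, Complex.sq_norm,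
      normSq_apply, normSq_apply]
    simp only [add_re, one_re, add_im, one_im, zero_add]
    nlinarith
  refine (norm_le hz.le).trans (mul_le_mul_of_nonneg_right (mul_le_mul_of_nonneg_left ?_
    (Real.exp_pos _).le) (Real.exp_pos _).le)
  exact rpow_mul_rpow_le_rpow_add hz (re_le_norm z) hz1z hβ hαβ

theorem norm_vertical_le (hβ : β.re ≤ 0) {v V s : ℝ} (hv : 0 ≤ v) (hvV : v ≤ V)
    (hs : 0 < s) :
    ‖oscKernel α β c (v + s * I)‖ ≤ Real.exp (π / 2 * (|α.im| + |β.im|)) *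
      ((s ^ α.re + (V + s) ^ α.re) * Real.exp (-(c * s))) := by
  have hre : (v + s * I : ℂ).re = v := by simp
  have him : (v + s * I : ℂ).im = s := by simp
  have hs_le : s ≤ ‖(v + s * I : ℂ)‖ := by
    simpa [him, abs_of_pos hs] using abs_im_le_norm (v + s * I : ℂ)
  have hle_Vs : ‖(v + s * I : ℂ)‖ ≤ V + s := by
    refine (norm_le_abs_re_add_abs_im _).trans ?_
    rw [hre, him, abs_of_nonneg hv, abs_of_pos hs]
    linarith
  refine (norm_le_of_re_nonpos hβ (by rw [hre]; exact hv)).trans ?_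
  rw [him, ← mul_assoc]
  gcongr
  exact rpow_le_rpow_add_rpow _ hs hs_le hle_Vs

theorem differentiableAt {z : ℂ} (hz : 0 ≤ z.re) (hz0 : z ≠ 0) :
    DifferentiableAt ℂ (oscKernel α β c) z := by
  have hslit : z ∈ slitPlane := by
    rcases hz.lt_or_eq with h | h
    · exact Or.inl h
    · exact Or.inr fun him => hz0 (Complex.ext h.symm him)
  have hslit1 : 1 + z ∈ slitPlane := Or.inl (by simp only [add_re, one_re]; linarith)
  unfold oscKernel
  fun_prop (disch := assumption)

theorem continuousOn_vertical {v : ℝ} (hv : 0 ≤ v) :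
    ContinuousOn (fun s : ℝ => oscKernel α β c (v + s * I)) (Ioi 0) := fun s (hs : 0 < s) =>
  ((differentiableAt (by simpa using hv) fun h => hs.ne' <| by
    simpa using congrArg im h).continuousAt.comp (by fun_prop)).continuousWithinAt

theorem continuousOn_ofReal : ContinuousOn (fun t : ℝ => oscKernel α β c t) (Ioi 0) :=
  fun t (ht : 0 < t) => ((differentiableAt (by simpa using ht.le) (ofReal_ne_zero.2 ht.ne')
    ).continuousAt.comp continuous_ofReal.continuousAt).continuousWithinAt

theorem integrableOn_vertical (ha : -1 < α.re) (hβ : β.re ≤ 0) (hc : 0 < c) {v : ℝ}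
    (hv : 0 ≤ v) : IntegrableOn (fun s : ℝ => oscKernel α β c (v + s * I)) (Ioi 0) := by
  refine Integrable.mono' ((integrableOn_rpow_add_add_rpow_mul_exp_neg_mul hv ha hc).const_mul
      (Real.exp (π / 2 * (|α.im| + |β.im|))))
    ((continuousOn_vertical hv).aestronglyMeasurable measurableSet_Ioi) ?_
  filter_upwards [ae_restrict_mem measurableSet_Ioi] with s hs
  exact norm_vertical_le hβ hv le_rfl hs

theorem tendsto_intervalIntegral_horizontal (hβ : β.re ≤ 0) (hc : 0 < c) {ε R : ℝ}
    (hε : 0 ≤ ε) (hεR : ε ≤ R) :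
    Tendsto (fun T : ℝ => ∫ t in ε..R, oscKernel α β c (t + T * I)) atTop (𝓝 0) := by
  have hlim := ((tendsto_rpow_add_rpow_mul_exp_neg_mul_atTop α.re R hc).const_mul
    (Real.exp (π / 2 * (|α.im| + |β.im|)))).mul_const |R - ε|
  rw [mul_zero, zero_mul] at hlim
  refine squeeze_zero_norm' ?_ hlim
  filter_upwards [eventually_gt_atTop 0] with T hT
  refine intervalIntegral.norm_integral_le_of_norm_le_const fun t ht => ?_
  rw [uIoc_of_le hεR] at ht
  exact (norm_vertical_le hβ (hε.trans ht.1.le) ht.2 hT).trans_eq (by ring)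

theorem tendsto_integral_vertical_atTop (hβ : β.re ≤ 0) (hαβ : α.re + β.re < 0)
    (hc : 0 < c) :
    Tendsto (fun R : ℝ => ∫ s : ℝ in Ioi 0, oscKernel α β c (R + s * I)) atTop
      (𝓝 0) := by
  have hexp : IntegrableOn (fun s : ℝ => Real.exp (-(c * s))) (Ioi 0) := by
    simpa only [neg_mul] using exp_neg_integrableOn_Ioi 0 hc
  have hlim := ((tendsto_rpow_neg_atTop (neg_pos.2 hαβ)).const_mul
    (Real.exp (π / 2 * (|α.im| + |β.im|)))).mul_const (∫ s : ℝ in Ioi 0, Real.exp (-(c * s)))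
  rw [neg_neg, mul_zero, zero_mul] at hlim
  refine squeeze_zero_norm' ?_ hlim
  filter_upwards [eventually_gt_atTop 0] with R hR
  rw [← integral_const_mul]
  refine norm_integral_le_of_norm_le (hexp.const_mul _) ?_
  filter_upwards [ae_restrict_mem measurableSet_Ioi] with s hs
  simpa using norm_le_re_rpow (c := c) hβ hαβ.le (z := R + s * I) (by simpa using hR)

theorem integrableOn_ofReal (ha : -1 < α.re) (hβ : β.re ≤ 0) (hαβ : α.re + β.re < -1) :
    IntegrableOn (fun t : ℝ => oscKernel α β c t) (Ioi 0) := by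
  rw [← Ioc_union_Ioi_eq_Ioi zero_le_one]
  refine IntegrableOn.union ?_ ?_
  · refine Integrable.mono' (intervalIntegral.intervalIntegrable_rpow' ha).1
      ((continuousOn_ofReal.mono Ioc_subset_Ioi_self).aestronglyMeasurable measurableSet_Ioc) ?_
    filter_upwards [ae_restrict_mem measurableSet_Ioc] with t ht
    rw [norm_ofReal ht.1]
    exact mul_le_of_le_one_right (rpow_nonneg ht.1.le _)
      (rpow_le_one_of_one_le_of_nonpos (by linarith [ht.1]) hβ)
  · refine Integrable.mono' (integrableOn_Ioi_rpow_of_lt hαβ one_pos)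
      ((continuousOn_ofReal.mono (Ioi_subset_Ioi zero_le_one)).aestronglyMeasurable
        measurableSet_Ioi) ?_
    filter_upwards [ae_restrict_mem measurableSet_Ioi] with t (ht : 1 < t)
    have ht0 : 0 < t := one_pos.trans ht
    rw [norm_ofReal ht0, rpow_add ht0]
    gcongr ?_ * ?_
    exact rpow_le_rpow_of_nonpos ht0 (by linarith) hβ

theorem tendsto_integral_vertical_nhdsGT_zero (ha : -1 < α.re) (hβ : β.re ≤ 0) (hc : 0 < c) :
    Tendsto (fun ε : ℝ => ∫ s : ℝ in Ioi 0, oscKernel α β c (ε + s * I)) (𝓝[>] 0)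
      (𝓝 (∫ s : ℝ in Ioi 0, oscKernel α β c (s * I))) := by
  refine tendsto_integral_filter_of_dominated_convergence
    (fun s => Real.exp (π / 2 * (|α.im| + |β.im|)) * ((s ^ α.re + (1 + s) ^ α.re) *
      Real.exp (-(c * s)))) ?_ ?_ ?_ ?_
  · filter_upwards [self_mem_nhdsWithin] with ε (hε : 0 < ε)
    exact (continuousOn_vertical hε.le).aestronglyMeasurable measurableSet_Ioi
  · filter_upwards [Ioo_mem_nhdsGT one_pos] with ε hε
    filter_upwards [ae_restrict_mem measurableSet_Ioi] with s hs
    exact norm_vertical_le hβ hε.1.le hε.2.le hs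
  · exact (integrableOn_rpow_add_add_rpow_mul_exp_neg_mul zero_le_one ha hc).const_mul _
  · filter_upwards [ae_restrict_mem measurableSet_Ioi] with s (hs : 0 < s)
    have hK : ContinuousAt (oscKernel α β c) (s * I) := (differentiableAt (by simp)
      (mul_ne_zero (ofReal_ne_zero.2 hs.ne') I_ne_zero)).continuousAt
    have hline : Tendsto (fun ε : ℝ => (ε : ℂ) + s * I) (𝓝[>] 0) (𝓝 (s * I)) := by
      simpa using ((continuous_ofReal.tendsto 0).mono_left nhdsWithin_le_nhds).add_const
        ((s : ℂ) * I)
    exact hK.tendsto.comp hline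

theorem integral_ofReal_eq (ha : -1 < α.re) (hβ : β.re ≤ 0) (hαβ : α.re + β.re < -1)
    (hc : 0 < c) :
    ∫ t : ℝ in Ioi 0, oscKernel α β c t =
      I • ∫ s : ℝ in Ioi 0, oscKernel α β c (s * I) :=
  integral_Ioi_eq_I_smul_integral_imaginary
    (fun z (hz : 0 < z.re) =>
      (differentiableAt hz.le fun h => by simp [h] at hz).differentiableWithinAt)
    (fun _ hv => integrableOn_vertical ha hβ hc hv.le)
    (fun _ _ hε hεR => tendsto_intervalIntegral_horizontal hβ hc hε.le hεR)
    (tendsto_integral_vertical_atTop hβ (by linarith) hc) (integrableOn_ofReal ha hβ hαβ)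
    (tendsto_integral_vertical_nhdsGT_zero ha hβ hc)

theorem norm_integral_le (ha : -1 < α.re) (hβ : β.re ≤ 0) (hαβ : α.re + β.re < -1)
    (hc : 0 < c) :
    ‖∫ t : ℝ in Ioi 0, oscKernel α β c t‖ ≤
      Real.exp (π / 2 * (|α.im| + |β.im|)) * Real.Gamma (α.re + 1) * (1 / c) ^ (α.re + 1) := by
  rw [integral_ofReal_eq ha hβ hαβ hc, norm_smul, norm_I, one_mul]
  calc ‖∫ s : ℝ in Ioi 0, oscKernel α β c (s * I)‖
      ≤ ∫ s : ℝ in Ioi 0,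
          Real.exp (π / 2 * (|α.im| + |β.im|)) * (s ^ α.re * Real.exp (-(c * s))) := by
        refine norm_integral_le_of_norm_le
          ((integrableOn_rpow_mul_exp_neg_mul ha hc).const_mul _) ?_
        filter_upwards [ae_restrict_mem measurableSet_Ioi] with s (hs : 0 < s)
        simpa [abs_of_pos hs, mul_assoc] using
          norm_le_of_re_nonpos (c := c) hβ (z := s * I) (by simp)
    _ = Real.exp (π / 2 * (|α.im| + |β.im|)) *
          ((1 / c) ^ (α.re + 1) * Real.Gamma (α.re + 1)) := by
        rw [integral_const_mul, ← integral_rpow_mul_exp_neg_mul_Ioi (by linarith) hc,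
          add_sub_cancel_right]
    _ = _ := by ring

end oscKernel

theorem norm_integral_oscKernel_le_rpow {σ : ℝ} {u : ℂ} (hσ : σ < 1 / 2) (hu : u.re < 2 * σ)
    (hu1 : u.re ≤ 1) {x : ℝ} (hx : 0 < x) :
    ‖∫ t : ℝ in Ioi 0, oscKernel (2 * σ - 1 - u) (u - 1) (2 * π * x) t‖ ≤
      Real.exp (π * |u.im|) * Real.Gamma (2 * σ - u.re) * (2 * π) ^ (u.re - 2 * σ) *
        x ^ (u.re - 2 * σ) := by
  have hαre : (2 * σ - 1 - u : ℂ).re = 2 * σ - 1 - u.re := by simp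
  have hαim : (2 * σ - 1 - u : ℂ).im = -u.im := by simp
  have hβre : (u - 1).re = u.re - 1 := by simp
  have hβim : (u - 1).im = u.im := by simp
  have hbound := oscKernel.norm_integral_le (α := 2 * σ - 1 - u) (β := u - 1) (c := 2 * π * x)
    (by rw [hαre]; linarith [hu]) (by rw [hβre]; exact sub_nonpos.2 hu1)
    (by rw [hαre, hβre]; linarith [hσ])
    (by positivity)
  have hre : 2 * σ - 1 - u.re + 1 = 2 * σ - u.re := by ring
  have him : π / 2 * (|u.im| + |u.im|) = π * |u.im| := by ring
  have hpow : (1 / (2 * π * x)) ^ (2 * σ - u.re) =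
      (2 * π) ^ (u.re - 2 * σ) * x ^ (u.re - 2 * σ) := by
    rw [one_div, inv_rpow (by positivity), ← rpow_neg (by positivity), neg_sub,
      mul_rpow (by positivity) hx.le]
  rw [hαre, hαim, hβim, abs_neg, hre, him, hpow, ← mul_assoc] at hbound
  exact hbound

theorem continuousOn_exp_mul_Gamma_mul_rpow (σ : ℝ) :
    ContinuousOn (fun u : ℂ => Real.exp (π * |u.im|) * Real.Gamma (2 * σ - u.re) *
      (2 * π) ^ (u.re - 2 * σ)) {u | u.re < 2 * σ} := by
  intro u (hu : u.re < 2 * σ)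
  have hΓ : ContinuousAt Real.Gamma (2 * σ - u.re) := (Real.differentiableAt_Gamma fun m h => by
    linarith [(Nat.cast_nonneg m : (0 : ℝ) ≤ m)]).continuousAt
  refine ContinuousAt.continuousWithinAt ?_
  have : ContinuousAt (fun u : ℂ => (2 * π) ^ (u.re - 2 * σ)) u :=
    (Real.continuousAt_const_rpow (by positivity)).comp (by fun_prop)
  exact ((by fun_prop : Continuous fun u : ℂ => Real.exp (π * |u.im|)).continuousAt.mul
    (hΓ.comp (f := fun u : ℂ => 2 * σ - u.re) (by fun_prop))).mul this

theorem stmt12 (σ : ℝ) (h1 : 1/4 < σ) (h2 : σ < 1/2)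
    (h : ℂ → ℝ → ℂ)
    (hdef : ∀ u x, h u x = ∫ y : ℝ in Set.Ioi 0,
        (y : ℂ) ^ (2 * (σ : ℂ) - 1 - u) * ((1 : ℂ) + (y : ℂ)) ^ (u - 1)
          * Complex.exp (2 * (π : ℂ) * I * (x : ℂ) * (y : ℂ))) :
    ∀ K : Set ℂ, IsCompact K → (∀ u ∈ K, u.re < 0) →
      ∃ C > 0, ∃ x₀ : ℝ, ∀ x ≥ x₀, ∀ u ∈ K, ‖h u x‖ ≤ C * x ^ (u.re - 2 * σ) := by
  intro K hK hKre
  have hh : ∀ u x,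
      h u x = ∫ t : ℝ in Ioi 0, oscKernel (2 * σ - 1 - u) (u - 1) (2 * π * x) t := by
    intro u x
    rw [hdef]
    congr 1 with t
    simp only [oscKernel]
    push_cast
    ring_nf
  obtain ⟨C, hC⟩ := hK.exists_bound_of_continuousOn
    ((continuousOn_exp_mul_Gamma_mul_rpow σ).mono fun u hu => show u.re < 2 * σ by
      linarith [hKre u hu])
  refine ⟨max C 1, by positivity, 1, fun x hx u hu => ?_⟩
  have hx0 : 0 < x := one_pos.trans_le hx
  rw [hh]
  have hu0 := hKre u hu
  refine (norm_integral_oscKernel_le_rpow h2 (by linarith) (by linarith) hx0).trans ?_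
  gcongr
  exact (le_abs_self _).trans ((hC u hu).trans (le_max_left _ _))
end

section
/- Let f(x) = -2x·arcsinh(√(πk/(2x))) - 2πk·√(1/4 + x/(2πk)) + πk - π/4 for x > 0 and fixed k > 0. Then f''(x) > 0 for all x > 0, and f'(x) → 0⁻ as x → ∞; in particular f'(x) < 0 for all x > 0, so f' has no zero in any interval (T, 2T). -/
open Real Filter Topology

/-!
With `a = π k`, one has `f x = a - π / 4 - h (2 x)` where `h t = t arsinh √(a / t) + √(a (a + t))`.
The derivatives of the two algebraic contributions to `h'` cancel, leaving `h' t = arsinh √(a / t)`.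
Hence `f' x = -2 arsinh √(a / (2 x))`: it is negative, tends to `0`, and is strictly increasing
because `√(a / (2 x))` decreases.
-/

section
variable {a t : ℝ}

lemma hasDerivAt_sqrt_div (ha : 0 < a) (ht : 0 < t) :
    HasDerivAt (fun t => √(a / t)) (-(√(a / t) / (2 * t))) t := by
  have hsq : √(a / t) ^ 2 = a / t := sq_sqrt (div_pos ha ht).le
  refine (((hasDerivAt_const t a).div (hasDerivAt_id' t) ht.ne').sqrt
    (div_pos ha ht).ne').congr_deriv ?_
  simp only [Pi.div_apply]
  field_simp
  rw [hsq]
  field_simp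
  ring

lemma hasDerivAt_arsinh_sqrt_div (ha : 0 < a) (ht : 0 < t) :
    HasDerivAt (fun t => arsinh √(a / t)) (-(√(a / t) / (2 * t * √(1 + a / t)))) t := by
  refine (hasDerivAt_sqrt_div ha ht).arsinh.congr_deriv ?_
  rw [sq_sqrt (div_pos ha ht).le, smul_eq_mul]
  field_simp

lemma sqrt_div_div_sqrt_one_add (ha : 0 < a) (ht : 0 < t) :
    √(a / t) / √(1 + a / t) = a / √(a * (a + t)) := by
  have key : a / t / (1 + a / t) = a ^ 2 / (a * (a + t)) := by field_simp; ring
  rw [← sqrt_div' _ (by positivity), key, sqrt_div' _ (by positivity), sqrt_sq ha.le]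

lemma hasDerivAt_mul_arsinh_sqrt_div_add_sqrt (ha : 0 < a) (ht : 0 < t) :
    HasDerivAt (fun t => t * arsinh √(a / t) + √(a * (a + t))) (arsinh √(a / t)) t := by
  have hroot : HasDerivAt (fun t => √(a * (a + t))) (a / (2 * √(a * (a + t)))) t := by
    refine (((hasDerivAt_id' t).const_add a).const_mul a).sqrt (by positivity) |>.congr_deriv ?_
    rw [mul_one]
  refine ((hasDerivAt_id' t).mul (hasDerivAt_arsinh_sqrt_div ha ht)).add hroot |>.congr_deriv ?_
  have hcancel : t * (√(a / t) / (2 * t * √(1 + a / t))) = a / (2 * √(a * (a + t))) := by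
    rw [show a / (2 * √(a * (a + t))) = a / √(a * (a + t)) / 2 by ring,
      ← sqrt_div_div_sqrt_one_add ha ht]
    field_simp
  rw [mul_neg, hcancel]
  ring

lemma tendsto_arsinh_sqrt_div_atTop (a : ℝ) :
    Tendsto (fun t => arsinh √(a / t)) atTop (𝓝 0) := by
  have h : Tendsto (fun t => a / t) atTop (𝓝 0) := tendsto_const_nhds.div_atTop tendsto_id
  simpa only [Function.comp_def, sqrt_zero, arsinh_zero] using
    ((continuous_arsinh.comp continuous_sqrt).tendsto 0).comp h

lemma two_mul_mul_sqrt_quarter_add_div (ha : 0 < a) (x : ℝ) :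
    2 * a * √(1 / 4 + x / (2 * a)) = √(a * (a + 2 * x)) := by
  have key : (2 * a) ^ 2 * (1 / 4 + x / (2 * a)) = a * (a + 2 * x) := by field_simp; ring
  rw [← key, sqrt_mul (sq_nonneg _), sqrt_sq (by positivity)]

end

theorem stmt14 (k : ℝ) (hk : 0 < k)
    (f : ℝ → ℝ)
    (hf : ∀ x, f x = -2 * x * Real.arsinh (Real.sqrt (π * k / (2 * x)))
        - 2 * π * k * Real.sqrt (1/4 + x / (2 * π * k)) + π * k - π / 4) :
    (∀ x > 0, 0 < deriv (deriv f) x) ∧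
    Tendsto (deriv f) atTop (nhds 0) ∧
    ∀ x > 0, deriv f x < 0 := by
  have ha : 0 < π * k := by positivity
  have hf' : f = fun x => π * k - π / 4 -
      (2 * x * arsinh √(π * k / (2 * x)) + √(π * k * (π * k + 2 * x))) := by
    funext x
    rw [hf, mul_assoc 2 π k, two_mul_mul_sqrt_quarter_add_div ha]
    ring
  have hderiv : ∀ x > 0, deriv f x = -2 * arsinh √(π * k / (2 * x)) := fun x hx => by
    rw [hf']
    refine (((hasDerivAt_mul_arsinh_sqrt_div_add_sqrt ha (by positivity)).comp x
      (hasDerivAt_const_mul 2)).const_sub _).deriv.trans ?_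
    ring
  refine ⟨fun x hx => ?_, ?_, fun x hx => ?_⟩
  · have hev : deriv f =ᶠ[𝓝 x] fun x => -2 * arsinh √(π * k / (2 * x)) :=
      eventually_of_mem (Ioi_mem_nhds hx) hderiv
    have hderiv2 : HasDerivAt (fun x => -2 * arsinh √(π * k / (2 * x)))
        (-2 * (-(√(π * k / (2 * x)) / (2 * (2 * x) * √(1 + π * k / (2 * x)))) * 2)) x :=
      ((hasDerivAt_arsinh_sqrt_div ha (by positivity)).comp x
        (hasDerivAt_const_mul 2)).const_mul (-2)
    rw [hev.deriv_eq, hderiv2.deriv]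
    have hpos : 0 < √(π * k / (2 * x)) / (2 * (2 * x) * √(1 + π * k / (2 * x))) := by positivity
    linarith
  · have hlim := ((tendsto_arsinh_sqrt_div_atTop (π * k)).comp
      (tendsto_id.const_mul_atTop two_pos)).const_mul (-2)
    rw [mul_zero] at hlim
    exact hlim.congr' ((eventually_gt_atTop 0).mono fun x hx => (hderiv x hx).symm)
  · have hpos : 0 < arsinh √(π * k / (2 * x)) := arsinh_pos_iff.mpr (sqrt_pos.mpr (by positivity))
    linarith [hderiv x hx]
end

section
/- For fixed real α and k > 0, ∫_T^{2T} exp(-i(2x·arcsinh(√(πk/(2x))) + 2πk√(1/4 + x/(2πk)) - πk + π/4)) / (x^α · arcsinh(√(πk/(2x))) · (1/4 + x/(2πk))^{1/4}) dx = O(T^{-α + 3/4}) as T → ∞. -/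
/-!
Since `d/dx phase = 2 arsinh √(πk/(2x))`, the integrand is `phase' · g · exp(-i phase)` with
`g = 1 / (2 x^α arsinh(√(πk/(2x)))² (1/4 + x/(2πk))^{1/4})`, and one integration by parts bounds
the integral over `[a, b]` by `2 sup |g| + (b - a) sup |g'|`. For `x ≥ πk/2` the argument of
`arsinh` is at most `1`, so `arsinh √(πk/(2x)) ≍ x^{-1/2}`; hence `g ≪ x^{3/4-α}` and, through the
logarithmic derivative, `|g'| ≪ g / x`. On `[T, 2T]` both terms are `O(T^{3/4-α})`.
-/

open Complex Real Filter Asymptotics MeasureTheory Set intervalIntegral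

theorem norm_integral_mul_exp_neg_I_le {φ φ' g g' : ℝ → ℝ} {a b M M' : ℝ} (hab : a ≤ b)
    (hφ : ∀ x ∈ Icc a b, HasDerivAt φ (φ' x) x) (hφ' : ContinuousOn φ' (Icc a b))
    (hg : ∀ x ∈ Icc a b, HasDerivAt g (g' x) x)
    (hgM : ∀ x ∈ Icc a b, |g x| ≤ M) (hg'M : ∀ x ∈ Icc a b, |g' x| ≤ M') :
    ‖∫ x in a..b, ((φ' x * g x : ℝ) : ℂ) * cexp (-I * φ x)‖ ≤ 2 * M + M' * (b - a) := by
  have hu : ∀ x ∈ uIcc a b, HasDerivAt (fun x => (g x : ℂ)) (g' x) x := by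
    rw [uIcc_of_le hab]; exact fun x hx => (hg x hx).ofReal_comp
  have hv : ∀ x ∈ uIcc a b,
      HasDerivAt (fun x => I * cexp (-I * φ x)) (φ' x * cexp (-I * φ x)) x := by
    rw [uIcc_of_le hab]
    intro x hx
    refine (((hφ x hx).ofReal_comp.const_mul (-I)).cexp.const_mul I).congr_deriv ?_
    linear_combination (-(φ' x : ℂ) * cexp (-I * φ x)) * I_sq
  have hv' : IntervalIntegrable (fun x => (φ' x : ℂ) * cexp (-I * φ x)) volume a b := by
    refine ContinuousOn.intervalIntegrable ?_
    rw [uIcc_of_le hab]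
    refine (continuous_ofReal.comp_continuousOn hφ').mul fun x hx => ?_
    exact ((hφ x hx).ofReal_comp.const_mul (-I)).cexp.continuousAt.continuousWithinAt
  -- `g'` is only pinned down on `[a, b]`, where it agrees with the measurable function `deriv g`.
  have hu' : IntervalIntegrable (fun x => (g' x : ℂ)) volume a b := by
    rw [intervalIntegrable_iff_integrableOn_Ioc_of_le hab]
    refine IntegrableOn.congr_fun (f := fun x => ((deriv g x : ℝ) : ℂ)) ?_
      (fun x hx => by simp only [(hg x (Ioc_subset_Icc_self hx)).deriv]) measurableSet_Ioc
    refine Measure.integrableOn_of_bounded (M := M') measure_Ioc_lt_top.ne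
      (measurable_deriv g).complex_ofReal.aestronglyMeasurable ?_
    refine ae_restrict_of_forall_mem measurableSet_Ioc fun x hx => ?_
    rw [norm_real, norm_eq_abs, (hg x (Ioc_subset_Icc_self hx)).deriv]
    exact hg'M x (Ioc_subset_Icc_self hx)
  have hbdry : ∀ x ∈ Icc a b, ‖(g x : ℂ) * (I * cexp (-I * φ x))‖ ≤ M := fun x hx => by
    simpa [norm_exp] using hgM x hx
  have hrem : ‖∫ x in a..b, (g' x : ℂ) * (I * cexp (-I * φ x))‖ ≤ M' * (b - a) := by
    refine (intervalIntegral.norm_integral_le_of_norm_le_const fun x hx => ?_).trans_eq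
      (by rw [abs_of_nonneg (sub_nonneg.2 hab)])
    rw [uIoc_of_le hab] at hx
    simpa [norm_exp] using hg'M x (Ioc_subset_Icc_self hx)
  have ibp := integral_mul_deriv_eq_deriv_mul hu hv hu' hv'
  have hintegrand : (fun x => ((φ' x * g x : ℝ) : ℂ) * cexp (-I * φ x))
      = fun x => (g x : ℂ) * ((φ' x : ℂ) * cexp (-I * φ x)) := by
    ext x; push_cast; ring
  rw [hintegrand, ibp]
  calc _ ≤ ‖(g b : ℂ) * (I * cexp (-I * φ b)) - (g a : ℂ) * (I * cexp (-I * φ a))‖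
        + ‖∫ x in a..b, (g' x : ℂ) * (I * cexp (-I * φ x))‖ := norm_sub_le _ _
    _ ≤ ‖(g b : ℂ) * (I * cexp (-I * φ b))‖ + ‖(g a : ℂ) * (I * cexp (-I * φ a))‖
        + ‖∫ x in a..b, (g' x : ℂ) * (I * cexp (-I * φ x))‖ := by gcongr; exact norm_sub_le _ _
    _ ≤ M + M + M' * (b - a) := by
      gcongr
      exacts [hbdry b (right_mem_Icc.2 hab), hbdry a (left_mem_Icc.2 hab)]
    _ = 2 * M + M' * (b - a) := by ring

theorem rpow_le_two_rpow_abs_mul_rpow {β T y : ℝ} (hT : 0 < T) (h1 : T ≤ y) (h2 : y ≤ 2 * T) :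
    y ^ β ≤ 2 ^ |β| * T ^ β := by
  rcases le_or_gt 0 β with hβ | hβ
  · calc y ^ β ≤ (2 * T) ^ β := rpow_le_rpow (hT.le.trans h1) h2 hβ
      _ = 2 ^ β * T ^ β := mul_rpow zero_le_two hT.le
      _ ≤ 2 ^ |β| * T ^ β := by gcongr; exacts [one_le_two, le_abs_self β]
  · calc y ^ β ≤ T ^ β := rpow_le_rpow_of_nonpos hT h1 hβ.le
      _ ≤ 2 ^ |β| * T ^ β :=
        le_mul_of_one_le_left (by positivity) (one_le_rpow one_le_two (abs_nonneg β))

theorem Real.div_one_add_le_arsinh {x : ℝ} (hx : 0 ≤ x) : x / (1 + x) ≤ arsinh x := by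
  have hsqrt : 1 ≤ √(1 + x ^ 2) := Real.one_le_sqrt.2 (by nlinarith)
  calc x / (1 + x) = 1 - (1 + x)⁻¹ := by field_simp; ring
    _ ≤ 1 - (x + √(1 + x ^ 2))⁻¹ := sub_le_sub_left (inv_anti₀ (by positivity) (by linarith)) 1
    _ ≤ arsinh x := one_sub_inv_le_log_of_pos (by linarith)

noncomputable section
namespace ArsinhPhase

def ρ (k x : ℝ) : ℝ := √(π * k / (2 * x))
def θ (k x : ℝ) : ℝ := arsinh (ρ k x)
def θ' (k x : ℝ) : ℝ := -ρ k x / (2 * x * √(1 + ρ k x ^ 2))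
def σ (k x : ℝ) : ℝ := 1 / 4 + x / (2 * π * k)
def phase (k x : ℝ) : ℝ := 2 * x * θ k x + 2 * π * k * √(σ k x) - π * k + π / 4
/-- Normalised so that the integrand is `phase' * amplitude * exp (-I * phase)`. -/
def amplitude (α k x : ℝ) : ℝ := (2 * (x ^ α * θ k x ^ 2 * σ k x ^ ((1 : ℝ) / 4)))⁻¹
def amplitude' (α k x : ℝ) : ℝ :=
  -amplitude α k x * (α / x + 2 * θ' k x / θ k x + 1 / (8 * π * k * σ k x))

section Positive
variable {k x : ℝ} (hk : 0 < k) (hx : 0 < x)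
include hk hx

lemma ρ_pos : 0 < ρ k x := sqrt_pos.2 (by positivity)

lemma ρ_sq : ρ k x ^ 2 = π * k / (2 * x) := sq_sqrt (by positivity)

lemma θ_pos : 0 < θ k x := arsinh_pos_iff.2 (ρ_pos hk hx)

lemma σ_pos : 0 < σ k x := by unfold σ; positivity

lemma sqrt_σ : √(σ k x) = √(1 + ρ k x ^ 2) / (2 * ρ k x) := by
  have hρ := ρ_pos hk hx
  rw [eq_div_iff (by positivity), ← sqrt_sq (by positivity : 0 ≤ 2 * ρ k x),
    ← sqrt_mul (σ_pos hk hx).le, mul_pow, ρ_sq hk hx, σ]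
  congr 1
  field_simp
  ring

lemma hasDerivAt_ρ : HasDerivAt (ρ k) (-ρ k x / (2 * x)) x := by
  have hinv : HasDerivAt (fun y => π * k / (2 * y)) (π * k / 2 * -(x ^ 2)⁻¹) x :=
    ((hasDerivAt_inv hx.ne').const_mul (π * k / 2)).congr_of_eventuallyEq
      (.of_forall fun y => by ring)
  refine (hinv.sqrt (by positivity)).congr_deriv ?_
  have hρ := ρ_pos hk hx
  rw [show √(π * k / (2 * x)) = ρ k x from rfl, show π * k = ρ k x ^ 2 * (2 * x) by
    rw [ρ_sq hk hx]; field_simp]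
  field_simp

lemma hasDerivAt_θ : HasDerivAt (θ k) (θ' k x) x :=
  ((hasDerivAt_arsinh _).comp x (hasDerivAt_ρ hk hx)).congr_deriv (by unfold θ'; field_simp)

omit hk hx in
lemma hasDerivAt_σ : HasDerivAt (σ k) (1 / (2 * π * k)) x :=
  ((hasDerivAt_id x).div_const (2 * π * k)).const_add (1 / 4)

lemma hasDerivAt_phase : HasDerivAt (phase k) (2 * θ k x) x := by
  have h := ((((hasDerivAt_id x).const_mul 2).mul (hasDerivAt_θ hk hx)).add
    ((hasDerivAt_σ.sqrt (σ_pos hk hx).ne').const_mul (2 * π * k))).sub_const (π * k)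
    |>.add_const (π / 4)
  refine h.congr_deriv ?_
  have hρ := ρ_pos hk hx
  have hw : 0 < √(1 + ρ k x ^ 2) := sqrt_pos.2 (by positivity)
  rw [sqrt_σ hk hx, θ']
  simp only [id]
  field_simp
  ring

lemma hasDerivAt_amplitude (α : ℝ) : HasDerivAt (amplitude α k) (amplitude' α k x) x := by
  have hθ := θ_pos hk hx
  have hσ := σ_pos hk hx
  have hw : 0 < 2 * (x ^ α * θ k x ^ 2 * σ k x ^ ((1 : ℝ) / 4)) := by positivity
  have h := ((((hasDerivAt_rpow_const (p := α) (Or.inl hx.ne')).mul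
    ((hasDerivAt_θ hk hx).pow 2)).mul (hasDerivAt_σ.rpow_const (p := 1 / 4) (Or.inl hσ.ne'))).const_mul 2).inv hw.ne'
  refine h.congr_deriv ?_
  simp only [Pi.mul_apply, Pi.pow_apply]
  rw [amplitude', amplitude, rpow_sub_one hx.ne', rpow_sub_one hσ.ne']
  field_simp
  ring

lemma abs_θ'_le : |θ' k x| ≤ ρ k x / (2 * x) := by
  have hρ := ρ_pos hk hx
  have hw : 1 ≤ √(1 + ρ k x ^ 2) := one_le_sqrt.2 (by nlinarith)
  rw [θ', abs_div, abs_neg, abs_of_pos hρ, abs_of_pos (by positivity)]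
  exact div_le_div_of_nonneg_left hρ.le (by positivity)
    (le_mul_of_one_le_right (by positivity) hw)

lemma amplitude_pos (α : ℝ) : 0 < amplitude α k x := by
  have := θ_pos hk hx
  have := σ_pos hk hx
  unfold amplitude; positivity

lemma integrand_eq (α : ℝ) :
    cexp (-I * phase k x) / ((x ^ α * θ k x * σ k x ^ ((1 : ℝ) / 4) : ℝ) : ℂ)
      = ((2 * θ k x * amplitude α k x : ℝ) : ℂ) * cexp (-I * phase k x) := by
  have hθ := θ_pos hk hx
  have hσ := σ_pos hk hx
  have h : 2 * θ k x * amplitude α k x = (x ^ α * θ k x * σ k x ^ ((1 : ℝ) / 4))⁻¹ := by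
    rw [amplitude]
    field_simp
  rw [h, ofReal_inv, div_eq_mul_inv, mul_comm]

end Positive

section Large
variable {k x : ℝ} (hk : 0 < k) (hx : π * k / 2 ≤ x)
include hk hx

lemma pos_of_half_pi_mul_le : 0 < x := lt_of_lt_of_le (by positivity) hx

lemma ρ_le_one : ρ k x ≤ 1 :=
  sqrt_le_one.2 ((div_le_one (by linarith [pos_of_half_pi_mul_le hk hx])).2 (by linarith))

lemma half_ρ_le_θ : ρ k x / 2 ≤ θ k x := by
  have hρ := ρ_pos hk (pos_of_half_pi_mul_le hk hx)
  calc ρ k x / 2 ≤ ρ k x / (1 + ρ k x) := by gcongr; linarith [ρ_le_one hk hx]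
    _ ≤ θ k x := div_one_add_le_arsinh hρ.le

lemma amplitude_le (α : ℝ) :
    amplitude α k x ≤ 4 * (2 * π * k) ^ ((1 : ℝ) / 4) / (π * k) * x ^ (3 / 4 - α) := by
  have hx0 := pos_of_half_pi_mul_le hk hx
  have hρ := ρ_pos hk hx0
  have hc : 0 < 2 * π * k := by positivity
  have hlow : π * k / (4 * (2 * π * k) ^ ((1 : ℝ) / 4)) * x ^ (α - 3 / 4)
      ≤ 2 * (x ^ α * θ k x ^ 2 * σ k x ^ ((1 : ℝ) / 4)) := by
    calc π * k / (4 * (2 * π * k) ^ ((1 : ℝ) / 4)) * x ^ (α - 3 / 4)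
        = 2 * (x ^ α * (ρ k x / 2) ^ 2 * (x / (2 * π * k)) ^ ((1 : ℝ) / 4)) := by
          rw [div_pow, ρ_sq hk hx0, div_rpow hx0.le hc.le,
            show α - 3 / 4 = α + 1 / 4 + (-1) by ring, rpow_add hx0, rpow_add hx0, rpow_neg_one]
          field_simp
          ring
      _ ≤ 2 * (x ^ α * θ k x ^ 2 * σ k x ^ ((1 : ℝ) / 4)) := by
          gcongr
          · exact half_ρ_le_θ hk hx
          · exact le_add_of_nonneg_left (by norm_num)
  calc amplitude α k x ≤ (π * k / (4 * (2 * π * k) ^ ((1 : ℝ) / 4)) * x ^ (α - 3 / 4))⁻¹ :=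
        inv_anti₀ (by positivity) hlow
    _ = _ := by rw [mul_inv, inv_div, ← rpow_neg hx0.le, neg_sub]

lemma abs_amplitude'_le (α : ℝ) :
    |amplitude' α k x| ≤ (|α| + 9 / 4) / x * amplitude α k x := by
  have hx0 := pos_of_half_pi_mul_le hk hx
  have hρ := ρ_pos hk hx0
  have hθ := θ_pos hk hx0
  have hamp := amplitude_pos hk hx0 α
  have h1 : |α / x| = |α| / x := by rw [abs_div, abs_of_pos hx0]
  have h2 : |2 * θ' k x / θ k x| ≤ 2 / x := by
    rw [abs_div, abs_mul, abs_two, abs_of_pos hθ, div_le_div_iff₀ hθ hx0]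
    have := abs_θ'_le hk hx0
    have := half_ρ_le_θ hk hx
    rw [le_div_iff₀ (by positivity)] at *
    nlinarith
  have h3 : |1 / (8 * π * k * σ k x)| ≤ 1 / (4 * x) := by
    have hσ : x / (2 * π * k) ≤ σ k x := le_add_of_nonneg_left (by norm_num)
    rw [abs_of_pos (by have := σ_pos hk hx0; positivity)]
    rw [div_le_iff₀ (by positivity)] at hσ
    exact one_div_le_one_div_of_le (by positivity) (by linarith)
  rw [amplitude', abs_mul, abs_neg, abs_of_pos hamp, mul_comm]
  gcongr
  calc _ ≤ |α / x| + |2 * θ' k x / θ k x| + |1 / (8 * π * k * σ k x)| := abs_add_three _ _ _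
    _ ≤ |α| / x + 2 / x + 1 / (4 * x) := by rw [h1]; gcongr
    _ = (|α| + 9 / 4) / x := by field_simp; ring

end Large

lemma exists_norm_integral_le (α : ℝ) {k : ℝ} (hk : 0 < k) : ∃ C, ∀ T, π * k / 2 ≤ T →
    ‖∫ x in T..(2 * T), cexp (-I * phase k x) / ((x ^ α * θ k x * σ k x ^ ((1 : ℝ) / 4) : ℝ) : ℂ)‖
      ≤ C * T ^ (3 / 4 - α) := by
  refine ⟨(|α| + 17 / 4) * (4 * (2 * π * k) ^ ((1 : ℝ) / 4) / (π * k) * 2 ^ |3 / 4 - α|),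
    fun T hT => ?_⟩
  have hT0 := pos_of_half_pi_mul_le hk hT
  have hTT : T ≤ 2 * T := by linarith
  have hmem : ∀ x ∈ Icc T (2 * T), π * k / 2 ≤ x := fun x hx => hT.trans hx.1
  have hpos : ∀ x ∈ Icc T (2 * T), 0 < x := fun x hx => pos_of_half_pi_mul_le hk (hmem x hx)
  set M := 4 * (2 * π * k) ^ ((1 : ℝ) / 4) / (π * k) * 2 ^ |3 / 4 - α| * T ^ (3 / 4 - α) with hM
  have hampM : ∀ x ∈ Icc T (2 * T), |amplitude α k x| ≤ M := fun x hx => by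
    rw [abs_of_pos (amplitude_pos hk (hpos x hx) α)]
    calc amplitude α k x ≤ 4 * (2 * π * k) ^ ((1 : ℝ) / 4) / (π * k) * x ^ (3 / 4 - α) :=
          amplitude_le hk (hmem x hx) α
      _ ≤ 4 * (2 * π * k) ^ ((1 : ℝ) / 4) / (π * k) * (2 ^ |3 / 4 - α| * T ^ (3 / 4 - α)) := by
          gcongr; exact rpow_le_two_rpow_abs_mul_rpow hT0 hx.1 hx.2
      _ = M := by ring
  have hamp'M : ∀ x ∈ Icc T (2 * T), |amplitude' α k x| ≤ (|α| + 9 / 4) / T * M := fun x hx =>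
    (abs_amplitude'_le hk (hmem x hx) α).trans <|
      mul_le_mul (div_le_div_of_nonneg_left (by positivity) hT0 hx.1)
        ((le_abs_self _).trans (hampM x hx)) (amplitude_pos hk (hpos x hx) α).le (by positivity)
  rw [integral_congr fun x hx => integrand_eq hk (hpos x (uIcc_of_le hTT ▸ hx)) α]
  refine (norm_integral_mul_exp_neg_I_le hTT (fun x hx => hasDerivAt_phase hk (hpos x hx))
    (fun x hx => ((hasDerivAt_θ hk (hpos x hx)).continuousAt.const_mul 2).continuousWithinAt)
    (fun x hx => hasDerivAt_amplitude hk (hpos x hx) α) hampM hamp'M).trans_eq ?_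
  rw [hM]
  field_simp
  ring

end ArsinhPhase

end

theorem stmt16 (α k : ℝ) (hk : 0 < k) :
    (fun T : ℝ => ∫ x in T..(2 * T),
        Complex.exp (-I * ((2 * x * Real.arsinh (Real.sqrt (π * k / (2 * x)))
            + 2 * π * k * Real.sqrt (1/4 + x / (2 * π * k)) - π * k + π / 4 : ℝ) : ℂ)) /
          ((x ^ α * Real.arsinh (Real.sqrt (π * k / (2 * x)))
            * (1/4 + x / (2 * π * k)) ^ ((1:ℝ)/4) : ℝ) : ℂ))
      =O[atTop] fun T : ℝ => T ^ (-α + 3/4) := by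
  obtain ⟨C, hC⟩ := ArsinhPhase.exists_norm_integral_le α hk
  refine isBigO_iff.2 ⟨C, ?_⟩
  filter_upwards [eventually_ge_atTop (π * k / 2)] with T hT
  rw [norm_of_nonneg (rpow_nonneg (ArsinhPhase.pos_of_half_pi_mul_le hk hT).le _), neg_add_eq_sub]
  exact hC T hT
end
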